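/- Let D be a simple strongly connected digraph that is not a directed cycle, let (u,v) be an arc of D, let w be a new vertex not in D, and let D^w be the digraph with vertex set V(D) ∪ {w} and arc set E(D) − {(u,v)} + {(u,w),(w,v)} (the subdivision of the arc (u,v)). Then q(D) ≥ q(D^w). -/

import Mathlib

open Matrix

namespace SignlessDigraph

variable {n : ℕ}

/-- Real adjacency matrix of a (multi)digraph on `Fin n`, given by arc multiplicities. -/
def adjMat (W : Fin n → Fin n → ℕ) : Matrix (Fin n) (Fin n) ℝ :=
  fun i j => (W i j : ℝ)

/-- Outdegree of a vertex. -/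
def outdeg (W : Fin n → Fin n → ℕ) (i : Fin n) : ℕ := ∑ j, W i j

/-- Indegree of a vertex. -/
def indeg (W : Fin n → Fin n → ℕ) (i : Fin n) : ℕ := ∑ j, W j i

/-- The signless Laplacian matrix `Q(D) = diag(outdegrees) + A(D)`. -/
noncomputable def Qmat (W : Fin n → Fin n → ℕ) : Matrix (Fin n) (Fin n) ℝ :=
  Matrix.diagonal (fun i => (outdeg W i : ℝ)) + adjMat W

/-- Spectral radius of a real matrix: the maximum modulus of its (complex) eigenvalues. -/
noncomputable def radius (M : Matrix (Fin n) (Fin n) ℝ) : ℝ :=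
  sSup {r : ℝ | ∃ μ ∈ spectrum ℂ (M.map ((↑) : ℝ → ℂ)), r = ‖μ‖}

/-- The signless Laplacian spectral radius `q(D)`. -/
noncomputable def q (W : Fin n → Fin n → ℕ) : ℝ := radius (Qmat W)

/-- The (adjacency) spectral radius `ρ(D)`. -/
noncomputable def rho (W : Fin n → Fin n → ℕ) : ℝ := radius (adjMat W)

/-- A digraph is simple: no loops and no multiple arcs. -/
def Simple (W : Fin n → Fin n → ℕ) : Prop :=
  (∀ i, W i i = 0) ∧ ∀ i j, W i j ≤ 1

/-- Strong connectivity: every vertex is reachable from every vertex by a directed path. -/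
def StronglyConnected (W : Fin n → Fin n → ℕ) : Prop :=
  ∀ i j : Fin n, Relation.ReflTransGen (fun a b => W a b ≠ 0) i j

/-- Isomorphism of digraphs on `Fin n`. -/
def Iso (W W' : Fin n → Fin n → ℕ) : Prop :=
  ∃ e : Fin n ≃ Fin n, ∀ i j, W (e i) (e j) = W' i j

/-- The clique number: maximum size of a set of vertices with all arcs in both directions. -/
noncomputable def cliqueNum (W : Fin n → Fin n → ℕ) : ℕ :=
  sSup {d : ℕ | ∃ s : Finset (Fin n), s.card = d ∧ ∀ i ∈ s, ∀ j ∈ s, i ≠ j → W i j ≠ 0}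

/-- `W` has a directed cycle of length `c`. -/
def HasCycleLen (W : Fin n → Fin n → ℕ) (c : ℕ) : Prop :=
  ∃ (hc : 2 ≤ c) (p : Fin c → Fin n), Function.Injective p ∧
    ∀ i : Fin c, W (p i) (p ⟨((i : ℕ) + 1) % c, Nat.mod_lt _ (by omega)⟩) ≠ 0

/-- The girth: length of a shortest directed cycle. -/
noncomputable def girth (W : Fin n → Fin n → ℕ) : ℕ := sInf {c | HasCycleLen W c}

/-- The complete digraph `K_n^↔`. -/
def Kcomp (n : ℕ) : Fin n → Fin n → ℕ := fun i j => if i = j then 0 else 1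

/-- The directed cycle `C_n^→`, with arcs `i → i+1 (mod n)`. -/
def cyc (n : ℕ) : Fin n → Fin n → ℕ := fun i j => if (j : ℕ) = ((i : ℕ) + 1) % n then 1 else 0

/-- The digraph `B_{n,d}` (for `2 ≤ d ≤ n-1`): a complete digraph on the vertices
`0, …, d-1` together with a directed path `0 → d → d+1 → ⋯ → n-1 → 1`
(the path `u_1 u_2 ⋯ u_{n-d+2}` with `u_1 = 0`, `u_{n-d+2} = 1`,
and internal vertices `d, …, n-1`). -/
def B (n d : ℕ) : Fin n → Fin n → ℕ := fun i j =>
  if i ≠ j ∧ (i : ℕ) < d ∧ (j : ℕ) < d then 1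
  else if (i : ℕ) = 0 ∧ (j : ℕ) = d then 1
  else if d ≤ (i : ℕ) ∧ (j : ℕ) = (i : ℕ) + 1 then 1
  else if (i : ℕ) = n - 1 ∧ (j : ℕ) = 1 then 1
  else 0

/-- `B'_{n,d} = B_{n,d} − (u_{n-d+1}, u_{n-d+2}) + (u_{n-d+1}, u_1)`, i.e. the arc
`n-1 → 1` is replaced by the arc `n-1 → 0`. -/
def B' (n d : ℕ) : Fin n → Fin n → ℕ := fun i j =>
  if (i : ℕ) = n - 1 ∧ (j : ℕ) = 1 then 0
  else if (i : ℕ) = n - 1 ∧ (j : ℕ) = 0 then 1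
  else B n d i j

/-- The digraph `C_{n,g}` (for `2 ≤ g ≤ n-1`): vertices `u_1, …, u_n` are `0, …, n-1`,
with arcs `i → i+1` for `0 ≤ i ≤ n-2` together with the arcs `g-1 → 0` and `n-1 → 0`. -/
def Cng (n g : ℕ) : Fin n → Fin n → ℕ := fun i j =>
  if (j : ℕ) = (i : ℕ) + 1 then 1
  else if ((i : ℕ) = g - 1 ∨ (i : ℕ) = n - 1) ∧ (j : ℕ) = 0 then 1
  else 0

/-- `C'_{n,g} = C_{n,g} − (u_n, u_1) + (u_n, u_g)`, i.e. the arc `n-1 → 0` is replaced by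
the arc `n-1 → g-1`. -/
def Cng' (n g : ℕ) : Fin n → Fin n → ℕ := fun i j =>
  if (i : ℕ) = n - 1 ∧ (j : ℕ) = 0 then 0
  else if (i : ℕ) = n - 1 ∧ (j : ℕ) = g - 1 then 1
  else Cng n g i j

/-- The θ-digraph `θ(a,b,c)` realized on `Fin n` (intended for `n = a + b + c + 2`):
vertex `0` is the common initial vertex of the paths `P_{a+2}`, `P_{b+2}` and terminal
vertex of `P_{c+2}`; vertex `1` is the common terminal vertex of `P_{a+2}`, `P_{b+2}`
and initial vertex of `P_{c+2}`; the internal vertices of the three paths are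
`2, …, a+1`, `a+2, …, a+b+1` and `a+b+2, …, a+b+c+1` respectively. -/
def theta (n a b c : ℕ) : Fin n → Fin n → ℕ := fun i j =>
  if ((a = 0 ∧ (i : ℕ) = 0 ∧ (j : ℕ) = 1) ∨
      (a ≠ 0 ∧ (((i : ℕ) = 0 ∧ (j : ℕ) = 2) ∨
        (2 ≤ (i : ℕ) ∧ (i : ℕ) ≤ a ∧ (j : ℕ) = (i : ℕ) + 1) ∨
        ((i : ℕ) = a + 1 ∧ (j : ℕ) = 1))) ∨
      (b = 0 ∧ (i : ℕ) = 0 ∧ (j : ℕ) = 1) ∨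
      (b ≠ 0 ∧ (((i : ℕ) = 0 ∧ (j : ℕ) = a + 2) ∨
        (a + 2 ≤ (i : ℕ) ∧ (i : ℕ) ≤ a + b ∧ (j : ℕ) = (i : ℕ) + 1) ∨
        ((i : ℕ) = a + b + 1 ∧ (j : ℕ) = 1))) ∨
      (c = 0 ∧ (i : ℕ) = 1 ∧ (j : ℕ) = 0) ∨
      (c ≠ 0 ∧ (((i : ℕ) = 1 ∧ (j : ℕ) = a + b + 2) ∨
        (a + b + 2 ≤ (i : ℕ) ∧ (i : ℕ) ≤ a + b + c ∧ (j : ℕ) = (i : ℕ) + 1) ∨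
        ((i : ℕ) = a + b + c + 1 ∧ (j : ℕ) = 0))))
  then 1 else 0

/-- The digraph `K→(n,k,m)`: the vertex set is partitioned into
`V₁ = {0,…,m-1}`, `S = {m,…,m+k-1}`, `V₂ = {m+k,…,n-1}`; it is the complete digraph
with all arcs from `V₂` to `V₁` removed. -/
def Kdir (n k m : ℕ) : Fin n → Fin n → ℕ := fun i j =>
  if i = j then 0
  else if m + k ≤ (i : ℕ) ∧ (j : ℕ) < m then 0
  else 1

/-- The digraph `D_{uv}` obtained from `D` by deleting the arc `(u,v)`, identifying `u`
with `v` (the merged vertex is `v`; the vertex `u` becomes isolated) and deleting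
multiple arcs (and loops). -/
def contract (W : Fin n → Fin n → ℕ) (u v : Fin n) : Fin n → Fin n → ℕ :=
  fun i j =>
    if i = u ∨ j = u ∨ i = j then 0
    else if i = v then min 1 (W v j + W u j)
    else if j = v then min 1 (W i v + W i u)
    else min 1 (W i j)

/-- The digraph `D^w` obtained from `D` by subdividing the arc `(u,v)` with a new
vertex `w` (realized as the last vertex of `Fin (n+1)`). -/
def subdivide (W : Fin n → Fin n → ℕ) (u v : Fin n) : Fin (n + 1) → Fin (n + 1) → ℕ :=
  fun i j =>
    if hi : (i : ℕ) < n then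
      if hj : (j : ℕ) < n then
        if (⟨(i : ℕ), hi⟩ : Fin n) = u ∧ (⟨(j : ℕ), hj⟩ : Fin n) = v then 0
        else W ⟨(i : ℕ), hi⟩ ⟨(j : ℕ), hj⟩
      else if (⟨(i : ℕ), hi⟩ : Fin n) = u then 1 else 0
    else
      if hj : (j : ℕ) < n then (if (⟨(j : ℕ), hj⟩ : Fin n) = v then 1 else 0)
      else 0

/-!
Fix `s > q(D)`. By Gelfand's formula some power of `Q(D)` has row sums below the matching
power of `s`, and a truncated Neumann series then gives a positive `y` with `Q(D) y ≤ s y`;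
as every vertex of `D` has an out-arc, `Q(D) 1 ≥ 2`, which forces `s ≥ 2`. Extending `y` by
the weight `y v / (s - 1)` on `w` gives a positive `y'` with `Q(D^w) y' ≤ s y'`, and by the
Collatz–Wielandt argument every eigenvalue of `Q(D^w)` has modulus at most `s`.
-/

end SignlessDigraph

namespace Matrix

variable {ι : Type*} [Fintype ι] {A : Matrix ι ι ℝ}

lemma mulVec_mono (hA : ∀ i j, 0 ≤ A i j) {x y : ι → ℝ} (h : x ≤ y) :
    A *ᵥ x ≤ A *ᵥ y :=
  fun i => Finset.sum_le_sum fun j _ => mul_le_mul_of_nonneg_left (h j) (hA i j)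

lemma norm_map_mulVec_apply_le (hA : ∀ i j, 0 ≤ A i j) (x : ι → ℂ) (i : ι) :
    ‖(A.map ((↑) : ℝ → ℂ) *ᵥ x) i‖ ≤ (A *ᵥ fun j => ‖x j‖) i := by
  refine (norm_sum_le _ _).trans_eq (Finset.sum_congr rfl fun j _ => ?_)
  show ‖(A i j : ℂ) * x j‖ = A i j * ‖x j‖
  rw [norm_mul, Complex.norm_real, Real.norm_of_nonneg (hA i j)]

lemma norm_le_of_mulVec_le [DecidableEq ι] (hA : ∀ i j, 0 ≤ A i j) {y : ι → ℝ}
    (hy : ∀ i, 0 < y i) {s : ℝ} (h : A *ᵥ y ≤ s • y) {μ : ℂ}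
    (hμ : μ ∈ spectrum ℂ (A.map ((↑) : ℝ → ℂ))) : ‖μ‖ ≤ s := by
  rw [← spectrum_toLin', ← Module.End.hasEigenvalue_iff_mem_spectrum] at hμ
  obtain ⟨x, hx⟩ := hμ.exists_hasEigenvector
  have hAx : A.map ((↑) : ℝ → ℂ) *ᵥ x = μ • x := by simpa using hx.apply_eq_smul
  obtain ⟨j, hj⟩ := Function.ne_iff.1 hx.2
  have : Nonempty ι := ⟨j⟩
  obtain ⟨i, hi⟩ := Finite.exists_max fun j => ‖x j‖ / y j
  set c := ‖x i‖ / y i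
  have hc : 0 < c := (div_pos (norm_pos_iff.2 hj) (hy j)).trans_le (hi j)
  have hxc : (fun j => ‖x j‖) ≤ c • y := fun j => (div_le_iff₀ (hy j)).1 (hi j)
  have hxi : ‖x i‖ = c * y i := (div_mul_cancel₀ _ (hy i).ne').symm
  have key : ‖μ‖ * (c * y i) ≤ s * (c * y i) := calc
    ‖μ‖ * (c * y i) = ‖(A.map ((↑) : ℝ → ℂ) *ᵥ x) i‖ := by
      rw [hAx, Pi.smul_apply, smul_eq_mul, norm_mul, hxi]
    _ ≤ (A *ᵥ c • y) i := (norm_map_mulVec_apply_le hA x i).trans (mulVec_mono hA hxc i)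
    _ = c * (A *ᵥ y) i := by rw [mulVec_smul]; rfl
    _ ≤ c * (s * y i) := mul_le_mul_of_nonneg_left (h i) hc.le
    _ = s * (c * y i) := by ring
  exact le_of_mul_le_mul_right key (mul_pos hc (hy i))

lemma le_of_le_mulVec_one_of_mulVec_le [Nonempty ι] (hA : ∀ i j, 0 ≤ A i j) {y : ι → ℝ}
    (hy : ∀ i, 0 < y i) {r s : ℝ} (hr : ∀ i, r ≤ (A *ᵥ 1) i) (h : A *ᵥ y ≤ s • y) :
    r ≤ s := by
  obtain ⟨i, hi⟩ := Finite.exists_min y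
  have key : y i * r ≤ y i * s := calc
    y i * r ≤ y i * (A *ᵥ 1) i := mul_le_mul_of_nonneg_left (hr i) (hy i).le
    _ = (A *ᵥ y i • 1) i := by rw [mulVec_smul]; rfl
    _ ≤ (A *ᵥ y) i := mulVec_mono hA (fun j => by simpa using hi j) i
    _ ≤ y i * s := (h i).trans_eq (mul_comm _ _)
  exact le_of_mul_le_mul_left key (hy i)

/-- The witness is the truncated Neumann series `∑_{t ≤ k} A ^ t *ᵥ 1`. -/
lemma exists_one_le_mulVec_le_self [DecidableEq ι] (hA : ∀ i j, 0 ≤ A i j) {k : ℕ}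
    (hk : A ^ (k + 1) *ᵥ 1 ≤ 1) : ∃ y, 1 ≤ y ∧ A *ᵥ y ≤ y := by
  set f : ℕ → ι → ℝ := fun t => A ^ t *ᵥ 1
  have hf : ∀ t, 0 ≤ f t := fun t =>
    (mulVec_zero _).symm.le.trans (mulVec_mono (pow_apply_nonneg hA t) zero_le_one)
  have hf0 : f 0 = 1 := by simp [f]
  set y := ∑ t ∈ Finset.range (k + 1), f t
  have htel : A *ᵥ y + 1 = y + f (k + 1) := calc
    A *ᵥ y + 1 = ∑ t ∈ Finset.range (k + 1), f (t + 1) + f 0 := by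
      simp [y, f, mulVec_sum, mulVec_mulVec, pow_succ']
    _ = ∑ t ∈ Finset.range (k + 2), f t := (Finset.sum_range_succ' f (k + 1)).symm
    _ = y + f (k + 1) := Finset.sum_range_succ f (k + 1)
  refine ⟨y, ?_, le_of_add_le_add_right (htel.trans_le (by gcongr))⟩
  calc 1 = f 0 := hf0.symm
    _ ≤ y := Finset.single_le_sum (fun t _ => hf t) (Finset.mem_range.2 k.succ_pos)

section LinftyOpNorm

attribute [local instance] Matrix.linftyOpNormedAddCommGroup

lemma mulVec_one_apply_le_norm (hA : ∀ i j, 0 ≤ A i j) (i : ι) :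
    (A *ᵥ 1) i ≤ ‖A.map ((↑) : ℝ → ℂ)‖ := by
  rw [linfty_opNorm_def]
  refine le_of_eq_of_le ?_ (NNReal.coe_le_coe.2 (Finset.le_sup
    (f := fun i => ∑ j, ‖A.map ((↑) : ℝ → ℂ) i j‖₊) (Finset.mem_univ i)))
  simp [mulVec, dotProduct, abs_of_nonneg (hA i _)]

end LinftyOpNorm

end Matrix

namespace SignlessDigraph

section Radius

variable {N : ℕ} {A : Matrix (Fin N) (Fin N) ℝ}

lemma radius_nonneg (A : Matrix (Fin N) (Fin N) ℝ) : 0 ≤ radius A :=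
  Real.sSup_nonneg (by rintro _ ⟨μ, -, rfl⟩; exact norm_nonneg μ)

lemma radius_le_of_mulVec_le (hA : ∀ i j, 0 ≤ A i j) {y : Fin N → ℝ} (hy : ∀ i, 0 < y i)
    {s : ℝ} (h : A *ᵥ y ≤ s • y) (hs : 0 ≤ s) : radius A ≤ s :=
  Real.sSup_le (by rintro _ ⟨μ, hμ, rfl⟩; exact norm_le_of_mulVec_le hA hy h hμ) hs

lemma spectralRadius_le_ofReal_radius (A : Matrix (Fin N) (Fin N) ℝ) :
    spectralRadius ℂ (A.map ((↑) : ℝ → ℂ)) ≤ ENNReal.ofReal (radius A) := by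
  have hbdd :
      BddAbove {r : ℝ | ∃ μ ∈ spectrum ℂ (A.map ((↑) : ℝ → ℂ)), r = ‖μ‖} :=
    ((Matrix.finite_spectrum _).image norm).bddAbove.mono
      (by rintro _ ⟨μ, hμ, rfl⟩; exact ⟨μ, hμ, rfl⟩)
  refine iSup₂_le fun μ hμ => (ofReal_norm μ).symm.trans_le ?_
  exact ENNReal.ofReal_le_ofReal (le_csSup hbdd ⟨μ, hμ, rfl⟩)

attribute [local instance] Matrix.linftyOpNormedRing Matrix.linftyOpNormedAlgebra

lemma exists_pow_mulVec_one_le_of_radius_lt (hA : ∀ i j, 0 ≤ A i j) {s : ℝ}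
    (hs : radius A < s) :
    ∃ k, A ^ (k + 1) *ᵥ 1 ≤ s ^ (k + 1) • 1 := by
  have hs0 : 0 < s := (radius_nonneg A).trans_lt hs
  have hlt : spectralRadius ℂ (A.map ((↑) : ℝ → ℂ)) < ENNReal.ofReal s :=
    (spectralRadius_le_ofReal_radius A).trans_lt ((ENNReal.ofReal_lt_ofReal_iff hs0).2 hs)
  have gelfand :=
    spectrum.pow_norm_pow_one_div_tendsto_nhds_spectralRadius (A.map ((↑) : ℝ → ℂ))
  obtain ⟨m, hm, hm1⟩ :=
    ((gelfand.eventually_lt_const hlt).and (Filter.eventually_ge_atTop 1)).exists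
  obtain ⟨k, rfl⟩ : ∃ k, m = k + 1 := ⟨m - 1, by omega⟩
  refine ⟨k, fun i => (mulVec_one_apply_le_norm (pow_apply_nonneg hA _) i).trans ?_⟩
  rw [ENNReal.ofReal_lt_ofReal_iff hs0, one_div, Real.rpow_inv_lt_iff_of_pos (norm_nonneg _)
    hs0.le (by positivity), Real.rpow_natCast] at hm
  have hmap : (A ^ (k + 1)).map ((↑) : ℝ → ℂ) = A.map ((↑) : ℝ → ℂ) ^ (k + 1) :=
    Matrix.map_pow A Complex.ofRealHom (k + 1)
  simpa [hmap] using hm.le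

lemma exists_one_le_mulVec_le_smul_of_radius_lt (hA : ∀ i j, 0 ≤ A i j) {s : ℝ}
    (hs : radius A < s) :
    ∃ y, 1 ≤ y ∧ A *ᵥ y ≤ s • y := by
  have hs0 : 0 < s := (radius_nonneg A).trans_lt hs
  obtain ⟨k, hk⟩ := exists_pow_mulVec_one_le_of_radius_lt hA hs
  have hB (i j) : 0 ≤ (s⁻¹ • A) i j := mul_nonneg (inv_nonneg.2 hs0.le) (hA i j)
  obtain ⟨y, hy1, hy⟩ := exists_one_le_mulVec_le_self hB (k := k) (by
    intro i
    rw [smul_pow, smul_mulVec, inv_pow, Pi.smul_apply, smul_eq_mul,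
      inv_mul_le_iff₀ (by positivity)]
    simpa using hk i)
  refine ⟨y, hy1, fun i => ?_⟩
  have hyi := hy i
  rw [smul_mulVec, Pi.smul_apply, smul_eq_mul, inv_mul_le_iff₀ hs0] at hyi
  exact hyi

end Radius

section Digraph

variable {n : ℕ} (W : Fin n → Fin n → ℕ)

lemma Qmat_nonneg (i j : Fin n) : 0 ≤ Qmat W i j := by
  simp only [Qmat, Matrix.add_apply, adjMat, diagonal_apply]
  split <;> positivity

lemma Qmat_mulVec_apply (z : Fin n → ℝ) (i : Fin n) :
    (Qmat W *ᵥ z) i = ∑ j, (W i j : ℝ) * (z i + z j) := by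
  rw [Qmat, add_mulVec, Pi.add_apply, mulVec_diagonal]
  simp only [outdeg, Nat.cast_sum, Finset.sum_mul, mul_add, Finset.sum_add_distrib]
  rfl

lemma Qmat_mulVec_one : Qmat W *ᵥ 1 = fun i => 2 * (outdeg W i : ℝ) := by
  ext i
  simp [Qmat_mulVec_apply, outdeg, Finset.mul_sum, mul_comm, ← two_mul]

variable {W}

lemma outdeg_pos_of_ne_zero {i j : Fin n} (h : W i j ≠ 0) : 0 < outdeg W i :=
  Nat.pos_of_ne_zero fun h0 => h (Finset.sum_eq_zero_iff.1 h0 j (Finset.mem_univ j))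

lemma StronglyConnected.outdeg_pos (hsc : StronglyConnected W) {u v : Fin n} (huv : W u v ≠ 0)
    (i : Fin n) : 0 < outdeg W i := by
  rcases (hsc i u).cases_head with rfl | ⟨c, hic, -⟩
  · exact outdeg_pos_of_ne_zero huv
  · exact outdeg_pos_of_ne_zero hic

end Digraph

section Subdivide

variable {n : ℕ} (W : Fin n → Fin n → ℕ) (u v : Fin n)

@[simp]
lemma subdivide_castSucc_castSucc (i j : Fin n) :
    subdivide W u v i.castSucc j.castSucc = if i = u ∧ j = v then 0 else W i j := by
  simp [subdivide]

@[simp]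
lemma subdivide_castSucc_last (i : Fin n) :
    subdivide W u v i.castSucc (Fin.last n) = if i = u then 1 else 0 := by
  simp [subdivide]

@[simp]
lemma subdivide_last_castSucc (j : Fin n) :
    subdivide W u v (Fin.last n) j.castSucc = if j = v then 1 else 0 := by
  simp [subdivide]

@[simp]
lemma subdivide_last_last : subdivide W u v (Fin.last n) (Fin.last n) = 0 := by
  simp [subdivide]

variable (y : Fin n → ℝ) (t : ℝ)

lemma Qmat_subdivide_mulVec_snoc_castSucc_of_ne {i : Fin n} (hi : i ≠ u) :
    (Qmat (subdivide W u v) *ᵥ Fin.snoc y t) i.castSucc = (Qmat W *ᵥ y) i := by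
  simp [Qmat_mulVec_apply, Fin.sum_univ_castSucc, hi]

lemma Qmat_subdivide_mulVec_snoc_castSucc_self :
    (Qmat (subdivide W u v) *ᵥ Fin.snoc y t) u.castSucc + W u v * (y u + y v) =
      (Qmat W *ᵥ y) u + (y u + t) := by
  have split_v (j : Fin n) : (W u j : ℝ) * (y u + y j) =
      (if j = v then 0 else (W u j : ℝ) * (y u + y j)) +
        if j = v then (W u v : ℝ) * (y u + y v) else 0 := by
    split_ifs with hj <;> simp [hj]
  simp only [Qmat_mulVec_apply, Fin.sum_univ_castSucc, subdivide_castSucc_castSucc,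
    subdivide_castSucc_last, Fin.snoc_castSucc, Fin.snoc_last, true_and, if_true,
    Nat.cast_ite, Nat.cast_zero, Nat.cast_one, ite_mul, zero_mul, one_mul]
  rw [Finset.sum_congr rfl fun j _ => split_v j, Finset.sum_add_distrib, Finset.sum_ite_eq']
  simp only [Finset.mem_univ, if_true]
  ring

lemma Qmat_subdivide_mulVec_snoc_last :
    (Qmat (subdivide W u v) *ᵥ Fin.snoc y t) (Fin.last n) = t + y v := by
  simp [Qmat_mulVec_apply, Fin.sum_univ_castSucc]

end Subdivide

section Subinvariant

variable {n : ℕ} {W : Fin n → Fin n → ℕ}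

/-- The weight `y v / (s - 1)` on the new vertex makes its own row tight, and is at most `y v`
as soon as `2 ≤ s`, which is what the row of `u` needs. -/
lemma Qmat_subdivide_mulVec_snoc_le {u v : Fin n} (huv : W u v ≠ 0) {y : Fin n → ℝ}
    (hy : 0 ≤ y) {s : ℝ} (hs : 2 ≤ s) (h : Qmat W *ᵥ y ≤ s • y) :
    Qmat (subdivide W u v) *ᵥ Fin.snoc y (y v / (s - 1)) ≤
      s • Fin.snoc y (y v / (s - 1)) := by
  set t := y v / (s - 1)
  intro p
  induction p using Fin.lastCases with
  | last =>
    have ht : (s - 1) * t = y v := mul_div_cancel₀ _ (by linarith)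
    rw [Qmat_subdivide_mulVec_snoc_last, Pi.smul_apply, Fin.snoc_last, smul_eq_mul]
    linarith
  | cast i =>
    rw [Pi.smul_apply, Fin.snoc_castSucc, smul_eq_mul]
    by_cases hi : i = u
    · subst hi
      have hself := Qmat_subdivide_mulVec_snoc_castSucc_self W i v y t
      have hm : (1 : ℝ) ≤ W i v := by exact_mod_cast Nat.one_le_iff_ne_zero.2 huv
      have htv : t ≤ y v := div_le_self (hy v) (by linarith)
      have hQ : (Qmat W *ᵥ y) i ≤ s * y i := h i
      linarith [mul_nonneg (sub_nonneg.2 hm) (add_nonneg (hy i) (hy v))]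
    · rw [Qmat_subdivide_mulVec_snoc_castSucc_of_ne W u v y t hi]
      exact h i

end Subinvariant

theorem q_subdivide_le_general {n : ℕ} (W : Fin n → Fin n → ℕ)
    (hsc : StronglyConnected W) (u v : Fin n) (huv : W u v ≠ 0) :
    q (subdivide W u v) ≤ q W := by
  refine le_of_forall_gt_imp_ge_of_dense fun s hs => ?_
  obtain ⟨y, hy1, hQy⟩ := exists_one_le_mulVec_le_smul_of_radius_lt (Qmat_nonneg W) hs
  have hy (i : Fin n) : 0 < y i := one_pos.trans_le (hy1 i)
  have : Nonempty (Fin n) := ⟨u⟩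
  have hs2 : 2 ≤ s := by
    refine le_of_le_mulVec_one_of_mulVec_le (Qmat_nonneg W) hy (fun i => ?_) hQy
    have hdeg : (1 : ℝ) ≤ outdeg W i := by exact_mod_cast hsc.outdeg_pos huv i
    rw [Qmat_mulVec_one]
    linarith
  have hy' (p : Fin (n + 1)) : 0 < (Fin.snoc y (y v / (s - 1)) : Fin (n + 1) → ℝ) p := by
    induction p using Fin.lastCases with
    | last => simpa using div_pos (hy v) (by linarith)
    | cast i => simpa using hy i
  exact radius_le_of_mulVec_le (Qmat_nonneg _) hy'
    (Qmat_subdivide_mulVec_snoc_le huv (fun i => (hy i).le) hs2 hQy) (by linarith)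

/-- Subdividing an arc of a strongly connected digraph which is not a
directed cycle does not increase the signless Laplacian spectral radius:
`q(D) ≥ q(D^w)`. -/
theorem q_subdivide_le {n : ℕ} (W : Fin n → Fin n → ℕ) (hW : Simple W)
    (hsc : StronglyConnected W) (hnc : ¬ Iso W (cyc n)) (u v : Fin n) (huv : W u v ≠ 0) :
    q (subdivide W u v) ≤ q W :=
  q_subdivide_le_general W hsc u v huv

end SignlessDigraph
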